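/- Let f ∈ R = k[[x₁,…,xₙ]] (k of characteristic zero, n ≥ 2) define an isolated hypersurface singularity at the origin. Then the Jacobian ideal I_f can be generated by n elements if and only if there exists a syzygy with a unit entry among the generators (∂f/∂x₁, …, ∂f/∂xₙ, f) of I_f; that is, if and only if there exist a₀, a₁, …, aₙ ∈ R with a₁·∂f/∂x₁ + ⋯ + aₙ·∂f/∂xₙ + a₀·f = 0 and at least one aᵢ invertible in R (i.e., aᵢ ∉ 𝔪). -/

import Mathlib

noncomputable section

open MvPowerSeries

/-- Partial derivative `∂f/∂xᵢ` of a multivariate formal power series. -/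
def psDeriv {k : Type*} [Field k] {n : ℕ} (i : Fin n)
    (f : MvPowerSeries (Fin n) k) : MvPowerSeries (Fin n) k :=
  fun m => ((m i + 1 : ℕ) : k) * MvPowerSeries.coeff (m + Finsupp.single i 1) f

variable (k : Type*) [Field k] [CharZero k] (n : ℕ)

/-- The maximal ideal `𝔪 = ⟨x₁,…,xₙ⟩` of `k[[x₁,…,xₙ]]`. -/
def psMax : Ideal (MvPowerSeries (Fin n) k) :=
  Ideal.span (Set.range (MvPowerSeries.X : Fin n → MvPowerSeries (Fin n) k))

variable {k n}

/-- The gradient ideal `J_f = ⟨∂f/∂x₁,…,∂f/∂xₙ⟩`. -/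
def gradIdeal (f : MvPowerSeries (Fin n) k) : Ideal (MvPowerSeries (Fin n) k) :=
  Ideal.span (Set.range fun i : Fin n => psDeriv i f)

/-- The Jacobian (Tjurina) ideal `I_f = J_f + ⟨f⟩`. -/
def jacIdeal (f : MvPowerSeries (Fin n) k) : Ideal (MvPowerSeries (Fin n) k) :=
  gradIdeal f + Ideal.span {f}

/-- `f` defines an isolated hypersurface singularity at the origin. -/
def IsIsolatedSing (f : MvPowerSeries (Fin n) k) : Prop :=
  f ∈ (psMax k n) ^ 2 ∧
    IsFiniteLength (MvPowerSeries (Fin n) k) (MvPowerSeries (Fin n) k ⧸ gradIdeal f)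

/-- The length of a module: the supremum of the lengths of strict chains of submodules. -/
def moduleLength (R M : Type*) [Ring R] [AddCommGroup M] [Module R M] : ℕ∞ :=
  ⨆ s : RelSeries {p : Submodule R M × Submodule R M | p.1 < p.2}, (s.length : ℕ∞)

/-- The Milnor number `μ_f = λ(R/J_f)`. -/
def milnor (f : MvPowerSeries (Fin n) k) : ℕ∞ :=
  moduleLength (MvPowerSeries (Fin n) k) (MvPowerSeries (Fin n) k ⧸ gradIdeal f)

/-- The Tjurina number `τ_f = λ(R/I_f)`. -/
def tjurina (f : MvPowerSeries (Fin n) k) : ℕ∞ :=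
  moduleLength (MvPowerSeries (Fin n) k) (MvPowerSeries (Fin n) k ⧸ jacIdeal f)

/-- For an isolated hypersurface singularity `f`, the Jacobian ideal `I_f`
can be generated by `n` elements iff there is a syzygy
`a₁·∂f/∂x₁ + ⋯ + aₙ·∂f/∂xₙ + a₀·f = 0` of the generators `(∂f/∂x₁,…,∂f/∂xₙ,f)` in which
at least one coefficient is a unit of `R`. -/
theorem n_generators_iff_unit_syzygy (hn : 2 ≤ n) (f : MvPowerSeries (Fin n) k)
    (hf : IsIsolatedSing f) :
    (∃ g : Fin n → MvPowerSeries (Fin n) k, Ideal.span (Set.range g) = jacIdeal f) ↔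
      ∃ (a : Fin n → MvPowerSeries (Fin n) k) (a₀ : MvPowerSeries (Fin n) k),
        (∑ i : Fin n, a i * psDeriv i f) + a₀ * f = 0 ∧
        (IsUnit a₀ ∨ ∃ i : Fin n, IsUnit (a i)) := by
  classical
  constructor
  · rintro ⟨g, hg⟩
    set h : Fin (n + 1) → MvPowerSeries (Fin n) k := Fin.snoc (fun i => psDeriv i f) f with hh
    have hcs : ∀ i : Fin n, h i.castSucc = psDeriv i f := fun i => Fin.snoc_castSucc _ _ _
    have hlast : h (Fin.last n) = f := Fin.snoc_last _ _
    have hspan : Ideal.span (Set.range h) = jacIdeal f := by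
      apply le_antisymm
      · rw [Ideal.span_le]
        rintro x ⟨j, rfl⟩
        rw [jacIdeal, Ideal.add_eq_sup]
        induction j using Fin.lastCases with
        | last => rw [hlast]; exact Ideal.mem_sup_right (Ideal.mem_span_singleton_self f)
        | cast i => rw [hcs]; exact Ideal.mem_sup_left (Ideal.subset_span ⟨i, rfl⟩)
      · rw [jacIdeal, Ideal.add_eq_sup, sup_le_iff]
        constructor
        · rw [gradIdeal, Ideal.span_le]
          rintro x ⟨i, rfl⟩
          exact Ideal.subset_span ⟨i.castSucc, hcs i⟩
        · rw [Ideal.span_singleton_le_iff_mem]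
          exact Ideal.subset_span ⟨Fin.last n, hlast⟩
    have hB : ∀ j, ∃ c : Fin n → MvPowerSeries (Fin n) k, ∑ i, c i * g i = h j := by
      intro j
      have hm : h j ∈ Ideal.span (Set.range g) := by
        rw [hg, ← hspan]; exact Ideal.subset_span ⟨j, rfl⟩
      obtain ⟨c, hc⟩ := (Submodule.mem_span_range_iff_exists_fun _).mp hm
      exact ⟨c, by simpa [smul_eq_mul] using hc⟩
    have hC : ∀ i, ∃ c : Fin (n + 1) → MvPowerSeries (Fin n) k, ∑ j, c j * h j = g i := by
      intro i
      have hm : g i ∈ Ideal.span (Set.range h) := by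
        rw [hspan, ← hg]; exact Ideal.subset_span ⟨i, rfl⟩
      obtain ⟨c, hc⟩ := (Submodule.mem_span_range_iff_exists_fun _).mp hm
      exact ⟨c, by simpa [smul_eq_mul] using hc⟩
    choose B hBe using hB
    choose C hCe using hC
    set M : Matrix (Fin (n + 1)) (Fin (n + 1)) (MvPowerSeries (Fin n) k) := Matrix.of B * Matrix.of C with hM
    have hMapply : ∀ j l, M j l = ∑ i, B j i * C i l := fun j l => Matrix.mul_apply
    have hMh : ∀ j, ∑ l, M j l * h l = h j := by
      intro j
      calc ∑ l, M j l * h l = ∑ l, ∑ i, B j i * C i l * h l := by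
            simp only [hMapply, Finset.sum_mul]
        _ = ∑ i, ∑ l, B j i * (C i l * h l) := by
            rw [Finset.sum_comm]; simp only [mul_assoc]
        _ = ∑ i, B j i * g i := by
            simp only [← Finset.mul_sum, hCe]
        _ = h j := hBe j
    set φ := (MvPowerSeries.constantCoeff : MvPowerSeries (Fin n) k →+* k) with hφ
    have hne : M.map φ ≠ 1 := by
      intro h1
      have hrk : (M.map φ).rank = n + 1 := by
        rw [h1, Matrix.rank_one, Fintype.card_fin]
      have hle : (M.map φ).rank ≤ n := by
        rw [hM, Matrix.map_mul]
        exact le_trans (Matrix.rank_mul_le_right _ _)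
          (le_trans (Matrix.rank_le_card_height _) (le_of_eq (Fintype.card_fin n)))
      omega
    obtain ⟨j, l, hjl⟩ : ∃ j l, (M.map φ) j l ≠ (1 : Matrix (Fin (n + 1)) (Fin (n + 1)) k) j l := by
      by_contra hc
      push_neg at hc
      exact hne (by ext j l; exact hc j l)
    set a' : Fin (n + 1) → MvPowerSeries (Fin n) k := fun l => M j l - (1 : Matrix (Fin (n + 1)) (Fin (n + 1)) (MvPowerSeries (Fin n) k)) j l
      with ha'
    have hrel : ∑ l, a' l * h l = 0 := by
      have h1 : ∑ l, (1 : Matrix (Fin (n + 1)) (Fin (n + 1)) (MvPowerSeries (Fin n) k)) j l * h l = h j := by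
        simp [Matrix.one_apply]
      simp only [ha', sub_mul, Finset.sum_sub_distrib, hMh j, h1, sub_self]
    have hunit : IsUnit (a' l) := by
      rw [MvPowerSeries.isUnit_iff_constantCoeff]
      have hφa : φ (a' l) = (M.map φ) j l - (1 : Matrix (Fin (n + 1)) (Fin (n + 1)) k) j l := by
        simp [ha', Matrix.map_apply, Matrix.one_apply, apply_ite φ]
      rw [hφa]
      exact (sub_ne_zero.mpr hjl).isUnit
    refine ⟨fun i => a' i.castSucc, a' (Fin.last n), ?_, ?_⟩
    · have h2 := hrel
      rw [Fin.sum_univ_castSucc] at h2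
      simpa only [hcs, hlast] using h2
    · induction l using Fin.lastCases with
      | last => exact Or.inl hunit
      | cast i => exact Or.inr ⟨i, hunit⟩
  · rintro ⟨a, a₀, hrel, hu | ⟨i, hi⟩⟩
    · have hf' : f ∈ gradIdeal f := by
        have h0 : a₀ * f = -∑ i, a i * psDeriv i f := by linear_combination hrel
        have h1 : f = ↑hu.unit⁻¹ * (a₀ * f) := by
          rw [← mul_assoc, hu.val_inv_mul, one_mul]
        have hm : a₀ * f ∈ gradIdeal f := by
          rw [h0]
          exact Submodule.neg_mem _ (Ideal.sum_mem _ fun i _ =>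
            Ideal.mul_mem_left _ _ (Ideal.subset_span ⟨i, rfl⟩))
        have h4 := Ideal.mul_mem_left _ (↑hu.unit⁻¹ : MvPowerSeries (Fin n) k) hm
        rwa [← mul_assoc, hu.val_inv_mul, one_mul] at h4
      refine ⟨fun i => psDeriv i f, ?_⟩
      rw [jacIdeal, Ideal.add_eq_sup,
        sup_eq_left.mpr ((Ideal.span_singleton_le_iff_mem _).mpr hf')]
      rfl
    · refine ⟨Function.update (fun j => psDeriv j f) i f, ?_⟩
      apply le_antisymm
      · rw [Ideal.span_le]
        rintro x ⟨j, rfl⟩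
        rw [jacIdeal, Ideal.add_eq_sup]
        rcases eq_or_ne j i with rfl | hji
        · rw [Function.update_self]
          exact Ideal.mem_sup_right (Ideal.mem_span_singleton_self f)
        · rw [Function.update_of_ne hji]
          exact Ideal.mem_sup_left (Ideal.subset_span ⟨j, rfl⟩)
      · rw [jacIdeal, Ideal.add_eq_sup, sup_le_iff]
        constructor
        · rw [gradIdeal, Ideal.span_le]
          rintro x ⟨j, rfl⟩
          rcases eq_or_ne j i with rfl | hji
          · have h1 : a j * psDeriv j f
                = -(a₀ * f) - ∑ l ∈ Finset.univ.erase j, a l * psDeriv l f := by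
              have h2 := hrel
              rw [← Finset.add_sum_erase _ _ (Finset.mem_univ j)] at h2
              linear_combination h2
            have hmem : a j * psDeriv j f
                ∈ Ideal.span (Set.range (Function.update (fun l => psDeriv l f) j f)) := by
              rw [h1]
              refine Submodule.sub_mem _ (Submodule.neg_mem _ ?_) ?_
              · exact Ideal.mul_mem_left _ _
                  (Ideal.subset_span ⟨j, Function.update_self _ _ _⟩)
              · refine Ideal.sum_mem _ fun l hl => Ideal.mul_mem_left _ _
                  (Ideal.subset_span ⟨l, Function.update_of_ne (Finset.ne_of_mem_erase hl) _ _⟩)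
            have h4 := Ideal.mul_mem_left _ (↑hi.unit⁻¹ : MvPowerSeries (Fin n) k) hmem
            rw [← mul_assoc, hi.val_inv_mul, one_mul] at h4
            exact h4
          · exact Ideal.subset_span ⟨j, Function.update_of_ne hji _ _⟩
        · rw [Ideal.span_singleton_le_iff_mem]
          exact Ideal.subset_span ⟨i, Function.update_self _ _ _⟩

end
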